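/- arXiv:2302.04067 — 3 statements merged into one kernel-verified Lean document; each statement's English description precedes it below -/
import Mathlib

section
/- The coefficients d_k of the power series of 1/((1-q)(1-q²)(1-q³)), when extended by the exponential-polynomial closed form d_k = 47/72 + k/2 + k²/12 + ω^{3k}/8 + ω^{2k}/9 + ω^{4k}/9 with ω = exp(2πi/6), evaluate to 0 for all integers k with -5 ≤ k ≤ -1. -/
open Complex

/-- The primitive 6th root of unity ω = exp(2πi/6). -/
noncomputable def ω : ℂ := Complex.exp (2 * Real.pi * Complex.I / 6)

/-- The exponential-polynomial closed form for d_k, as a function of an integer k. -/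
noncomputable def dExt (k : ℤ) : ℂ :=
  47/72 + k/2 + (k : ℂ)^2/12 + ω^(3*k)/8 + ω^(2*k)/9 + ω^(4*k)/9

lemma ω_eq : ω = 1/2 + (Real.sqrt 3)/2 * Complex.I := by
  have h : (2 * (Real.pi : ℂ) * Complex.I / 6) = ((Real.pi/3 : ℝ) : ℂ) * Complex.I := by
    push_cast; ring
  rw [ω, h, Complex.exp_mul_I, ← Complex.ofReal_cos, ← Complex.ofReal_sin,
    Real.cos_pi_div_three, Real.sin_pi_div_three]
  push_cast; ring
lemma ω_sq : ω^2 = ω - 1 := by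
  have hs : ((Real.sqrt 3 : ℝ) : ℂ)^2 = 3 := by
    rw [← Complex.ofReal_pow, Real.sq_sqrt (by norm_num : (3:ℝ) ≥ 0)]; norm_num
  rw [ω_eq]
  linear_combination (Complex.I^2/4) * hs + (3/4) * Complex.I_sq

lemma ω_cube : ω^3 = -1 := by
  linear_combination (ω + 1) * ω_sq

lemma ω_four : ω^4 = -ω := by
  linear_combination ω * ω_cube

lemma ω_six : ω^6 = 1 := by
  linear_combination (ω^3 - 1) * ω_cube

lemma ω_ne : ω ≠ 0 := by
  intro h
  have := ω_six
  rw [h] at this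
  norm_num at this

lemma ω_zpow (a b : ℤ) : ω ^ (6*a + b) = ω ^ b := by
  rw [zpow_add₀ ω_ne, zpow_mul, show ω ^ (6:ℤ) = 1 by rw [show (6:ℤ) = (6:ℕ) by rfl,
    zpow_natCast, ω_six], one_zpow, one_mul]

theorem dExt_eq_zero_of_neg (k : ℤ) (h1 : -5 ≤ k) (h2 : k ≤ -1) : dExt k = 0 := by
  interval_cases k <;> unfold dExt
  · rw [show (3*(-5):ℤ) = 6*(-3)+3 by norm_num, show (2*(-5):ℤ) = 6*(-2)+2 by norm_num,
      show (4*(-5):ℤ) = 6*(-4)+4 by norm_num, ω_zpow, ω_zpow, ω_zpow,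
      show (3:ℤ) = (3:ℕ) by rfl, show (2:ℤ) = (2:ℕ) by rfl, show (4:ℤ) = (4:ℕ) by rfl,
      zpow_natCast, zpow_natCast, zpow_natCast, ω_cube, ω_sq, ω_four]
    push_cast; ring
  · rw [show (3*(-4):ℤ) = 6*(-2)+0 by norm_num, show (2*(-4):ℤ) = 6*(-2)+4 by norm_num,
      show (4*(-4):ℤ) = 6*(-3)+2 by norm_num, ω_zpow, ω_zpow, ω_zpow,
      show (4:ℤ) = (4:ℕ) by rfl, show (2:ℤ) = (2:ℕ) by rfl,
      zpow_natCast, zpow_natCast, ω_sq, ω_four]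
    simp only [zpow_zero, ω_cube, ω_sq, ω_four]; push_cast; ring
  · rw [show (3*(-3):ℤ) = 6*(-2)+3 by norm_num, show (2*(-3):ℤ) = 6*(-1)+0 by norm_num,
      show (4*(-3):ℤ) = 6*(-2)+0 by norm_num, ω_zpow, ω_zpow, ω_zpow,
      show (3:ℤ) = (3:ℕ) by rfl, zpow_natCast, ω_cube]
    simp only [zpow_zero, ω_cube, ω_sq, ω_four]; push_cast; ring
  · rw [show (3*(-2):ℤ) = 6*(-1)+0 by norm_num, show (2*(-2):ℤ) = 6*(-1)+2 by norm_num,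
      show (4*(-2):ℤ) = 6*(-2)+4 by norm_num, ω_zpow, ω_zpow, ω_zpow,
      show (2:ℤ) = (2:ℕ) by rfl, show (4:ℤ) = (4:ℕ) by rfl,
      zpow_natCast, zpow_natCast, ω_sq, ω_four]
    simp only [zpow_zero, ω_cube, ω_sq, ω_four]; push_cast; ring
  · rw [show (3*(-1):ℤ) = 6*(-1)+3 by norm_num, show (2*(-1):ℤ) = 6*(-1)+4 by norm_num,
      show (4*(-1):ℤ) = 6*(-1)+2 by norm_num, ω_zpow, ω_zpow, ω_zpow,
      show (3:ℤ) = (3:ℕ) by rfl, show (2:ℤ) = (2:ℕ) by rfl, show (4:ℤ) = (4:ℕ) by rfl,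
      zpow_natCast, zpow_natCast, zpow_natCast, ω_cube, ω_sq, ω_four]
    push_cast; ring
end

section
/- For every integer j ≥ 0, setting ℓ = 12j+8 and k = 18j+10, the coefficients of the Gaussian polynomial binom{ℓ+3}{3}_q satisfy p_k(ℓ,3) = p_{k+1}(ℓ,3); that is, strict increase fails at these infinitely many points in the first half of the coefficient sequence. -/
/-- The coefficient of `q^k` in the Gaussian polynomial (q-binomial coefficient)
`binom{ℓ+m}{m}_q = ∏_{i=1}^m (1-q^(ℓ+i))/(1-q^i)`, computed in `ℚ⟦q⟧`. -/
noncomputable def gaussCoeff (ℓ m k : ℕ) : ℚ :=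
  PowerSeries.coeff k
    ((∏ i ∈ Finset.range m, (1 - (PowerSeries.X : PowerSeries ℚ) ^ (ℓ + i + 1))) *
     (∏ i ∈ Finset.range m, (1 - (PowerSeries.X : PowerSeries ℚ) ^ (i + 1)))⁻¹)

/-!
Multiplying `binom{ℓ+3}{3}_q` by `1 - q` turns its coefficients into consecutive
differences `p_{n+1} - p_n`, and leaves `∏_{i=1}^3 (1 - q^(ℓ+i)) / ((1 - q^2)(1 - q^3))`.
The series `1/((1 - q^2)(1 - q^3))` has the explicit coefficients
`r n = ⌊n/6⌋ + [n ≢ 1 mod 6]`, and below degree `2ℓ + 3` only the linear terms of the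
numerator contribute, so `p_{n+1} - p_n = r (n+1) - r (n-ℓ) - r (n-ℓ-1) - r (n-ℓ-2)`.
For `ℓ = 12j+8`, `n = 18j+10` this is `(3j+2) - (j+1) - j - (j+1) = 0`.
-/

open PowerSeries

/-- The number of pairs `(a, b)` of naturals with `2a + 3b = n`. -/
def twoThreeCount (n : ℕ) : ℕ := n / 6 + if n % 6 = 1 then 0 else 1

lemma twoThreeCount_add_sub_five {n : ℕ} (hn : 5 ≤ n) :
    twoThreeCount n + twoThreeCount (n - 5) = twoThreeCount (n - 2) + twoThreeCount (n - 3) := by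
  unfold twoThreeCount
  split_ifs <;> omega

section TwoThreeSeries

variable (R : Type*) [CommRing R]

noncomputable def twoThreeSeries : R⟦X⟧ := mk fun n => (twoThreeCount n : R)

@[simp]
lemma coeff_twoThreeSeries (n : ℕ) : coeff n (twoThreeSeries R) = twoThreeCount n :=
  coeff_mk _ _

lemma one_sub_X_sq_mul_one_sub_X_cube_mul_twoThreeSeries :
    (1 - X ^ 2) * (1 - X ^ 3) * twoThreeSeries R = 1 := by
  set S := twoThreeSeries R
  rw [show (1 - X ^ 2) * (1 - X ^ 3) * S = S - X ^ 2 * S - X ^ 3 * S + X ^ 5 * S by ring]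
  ext n
  simp only [map_add, map_sub, coeff_X_pow_mul', coeff_twoThreeSeries, S, coeff_one]
  rcases lt_or_ge n 5 with hn | hn
  · interval_cases n <;> simp [twoThreeCount]
  · have h := congrArg (Nat.cast : ℕ → R) (twoThreeCount_add_sub_five hn)
    push_cast at h
    simp only [if_pos (by omega : 2 ≤ n), if_pos (by omega : 3 ≤ n), if_pos hn,
      if_neg (by omega : n ≠ 0)]
    linear_combination h

end TwoThreeSeries

lemma coeff_succ_one_sub_X_mul {R : Type*} [CommRing R] (n : ℕ) (φ : R⟦X⟧) :
    coeff (n + 1) ((1 - X) * φ) = coeff (n + 1) φ - coeff n φ := by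
  rw [sub_mul, one_mul, map_sub, coeff_succ_X_mul]

noncomputable def gaussSeries (ℓ m : ℕ) : ℚ⟦X⟧ :=
  (∏ i ∈ Finset.range m, (1 - X ^ (ℓ + i + 1))) *
    (∏ i ∈ Finset.range m, (1 - X ^ (i + 1)))⁻¹

lemma gaussCoeff_eq_coeff_gaussSeries (ℓ m k : ℕ) :
    gaussCoeff ℓ m k = coeff k (gaussSeries ℓ m) :=
  rfl

lemma one_sub_X_mul_gaussSeries_three (ℓ : ℕ) :
    (1 - X) * gaussSeries ℓ 3 =
      (∏ i ∈ Finset.range 3, (1 - X ^ (ℓ + i + 1))) * twoThreeSeries ℚ := by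
  set P : ℚ⟦X⟧ := ∏ i ∈ Finset.range 3, (1 - X ^ (i + 1))
  have hP : P = (1 - X) * ((1 - X ^ 2) * (1 - X ^ 3)) := by
    simp [P, Finset.prod_range_succ, mul_assoc]
  have hP_inv : P * P⁻¹ = 1 := PowerSeries.mul_inv_cancel _ (by simp [hP])
  have hPS : P * twoThreeSeries ℚ = 1 - X := by
    rw [hP, mul_assoc, one_sub_X_sq_mul_one_sub_X_cube_mul_twoThreeSeries, mul_one]
  calc (1 - X) * gaussSeries ℓ 3
      = (∏ i ∈ Finset.range 3, (1 - X ^ (ℓ + i + 1))) * twoThreeSeries ℚ * (P * P⁻¹) := by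
        rw [gaussSeries, ← hPS]; ring
    _ = _ := by rw [hP_inv, mul_one]

lemma prod_range_three_one_sub_X_pow_add {R : Type*} [CommRing R] (ℓ : ℕ) :
    ∏ i ∈ Finset.range 3, (1 - (X : R⟦X⟧) ^ (ℓ + i + 1)) =
      1 - X ^ (ℓ + 1) - X ^ (ℓ + 2) - X ^ (ℓ + 3) +
        X ^ (2 * ℓ + 3) * (1 + X + X ^ 2 - X ^ (ℓ + 3)) := by
  simp only [Finset.prod_range_succ, Finset.prod_range_zero]
  rw [show 2 * ℓ + 3 = (ℓ + 1) + (ℓ + 2) by ring]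
  simp only [pow_add, pow_one, pow_two, add_zero]
  ring

lemma coeff_prod_range_three_mul_twoThreeSeries {R : Type*} [CommRing R] {ℓ n : ℕ}
    (hℓn : ℓ + 3 ≤ n) (hn : n < 2 * ℓ + 3) :
    coeff n ((∏ i ∈ Finset.range 3, (1 - (X : R⟦X⟧) ^ (ℓ + i + 1))) * twoThreeSeries R) =
      twoThreeCount n - twoThreeCount (n - (ℓ + 1)) - twoThreeCount (n - (ℓ + 2))
        - twoThreeCount (n - (ℓ + 3)) := by
  rw [prod_range_three_one_sub_X_pow_add]
  simp only [add_mul, sub_mul, one_mul, mul_assoc, map_add, map_sub, coeff_X_pow_mul',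
    coeff_twoThreeSeries, if_pos hℓn, if_pos (by omega : ℓ + 1 ≤ n),
    if_pos (by omega : ℓ + 2 ≤ n), if_neg (by omega : ¬ 2 * ℓ + 3 ≤ n), add_zero]

lemma gaussCoeff_three_succ_sub {ℓ n : ℕ} (hℓn : ℓ + 2 ≤ n) (hn : n + 1 < 2 * ℓ + 3) :
    gaussCoeff ℓ 3 (n + 1) - gaussCoeff ℓ 3 n =
      twoThreeCount (n + 1) - twoThreeCount (n - ℓ) - twoThreeCount (n - ℓ - 1)
        - twoThreeCount (n - ℓ - 2) := by
  rw [gaussCoeff_eq_coeff_gaussSeries, gaussCoeff_eq_coeff_gaussSeries,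
    ← coeff_succ_one_sub_X_mul, one_sub_X_mul_gaussSeries_three,
    coeff_prod_range_three_mul_twoThreeSeries (by omega) hn,
    show n + 1 - (ℓ + 1) = n - ℓ by omega,
    show n + 1 - (ℓ + 2) = n - ℓ - 1 by omega, show n + 1 - (ℓ + 3) = n - ℓ - 2 by omega]

/-- Infinite family of failures of strict increase for binom{ℓ+3}{3}_q. -/
theorem strict_increase_fails (j : ℕ) :
    gaussCoeff (12 * j + 8) 3 (18 * j + 10) = gaussCoeff (12 * j + 8) 3 (18 * j + 11) := by
  have hcount : twoThreeCount (18 * j + 11) =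
      twoThreeCount (6 * j + 2) + twoThreeCount (6 * j + 1) + twoThreeCount (6 * j) := by
    unfold twoThreeCount
    split_ifs <;> omega
  have hdiff :=
    gaussCoeff_three_succ_sub (ℓ := 12 * j + 8) (n := 18 * j + 10) (by omega) (by omega)
  rw [show 18 * j + 10 - (12 * j + 8) = 6 * j + 2 by omega,
    show 6 * j + 2 - 1 = 6 * j + 1 by omega, show 6 * j + 2 - 2 = 6 * j by omega,
    hcount] at hdiff
  push_cast at hdiff
  linarith
end

section
/- For all integers ℓ ≥ 1 with ℓ ≠ 4 and all k with 1 ≤ k ≤ ⌊4ℓ/2⌋ - 3, the coefficients of binom{ℓ+4}{4}_q satisfy p_{k+1}(ℓ,4) - p_k(ℓ,4) ≥ 1. -/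
open PowerSeries Finset

namespace PowerSeries

section CommRing

variable {R : Type*} [CommRing R]

noncomputable def geomSeries (a : ℕ) : R⟦X⟧ :=
  mk fun n => if a ∣ n then 1 else 0

@[simp]
lemma coeff_geomSeries (a n : ℕ) : coeff n (geomSeries a : R⟦X⟧) = if a ∣ n then 1 else 0 :=
  coeff_mk _ _

@[simp]
lemma constantCoeff_geomSeries (a : ℕ) : constantCoeff (geomSeries a : R⟦X⟧) = 1 := by
  simp [← coeff_zero_eq_constantCoeff_apply]

lemma expand_geomSeries (p : ℕ) (hp : p ≠ 0) (a : ℕ) :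
    expand p hp (geomSeries a : R⟦X⟧) = geomSeries (p * a) := by
  ext n
  rw [coeff_expand, coeff_geomSeries]
  by_cases h : p ∣ n
  · simp only [if_pos h, coeff_geomSeries, Nat.dvd_div_iff_mul_dvd h]
  · rw [if_neg h, coeff_geomSeries, if_neg fun h' => h ((dvd_mul_right p a).trans h')]

lemma one_sub_X_pow_mul_geomSeries {a : ℕ} (ha : a ≠ 0) :
    (1 - X ^ a) * (geomSeries a : R⟦X⟧) = 1 := by
  have h : (1 - X) * (geomSeries 1 : R⟦X⟧) = 1 := by
    have h1 : (geomSeries 1 : R⟦X⟧) = mk 1 := by ext; simp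
    rw [h1, mul_comm, mk_one_mul_one_sub_eq_one]
  simpa [expand_geomSeries] using congrArg (expand a ha) h

lemma geomSeries_eq_one_add_X_pow_mul {a : ℕ} (ha : a ≠ 0) :
    (geomSeries a : R⟦X⟧) = (1 + X ^ a) * geomSeries (2 * a) := by
  refine (IsUnit.of_mul_eq_one _ (one_sub_X_pow_mul_geomSeries ha)).mul_left_cancel ?_
  rw [one_sub_X_pow_mul_geomSeries ha, ← mul_assoc,
    show (1 - X ^ a) * (1 + X ^ a) = (1 - X ^ (2 * a) : R⟦X⟧) by ring,
    one_sub_X_pow_mul_geomSeries (by omega)]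

/-- `∏_{a ∈ s} (1 - X^a)⁻¹`: its `n`-th coefficient counts the partitions of `n` into parts
taken from `s`. -/
noncomputable def partsSeries (s : Multiset ℕ) : R⟦X⟧ :=
  (s.map geomSeries).prod

@[simp]
lemma partsSeries_zero : (partsSeries 0 : R⟦X⟧) = 1 := rfl

@[simp]
lemma partsSeries_cons (a : ℕ) (s : Multiset ℕ) :
    (partsSeries (a ::ₘ s) : R⟦X⟧) = geomSeries a * partsSeries s := by
  simp [partsSeries]

@[simp]
lemma partsSeries_singleton (a : ℕ) : (partsSeries {a} : R⟦X⟧) = geomSeries a := by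
  simp [partsSeries]

lemma coeff_zero_partsSeries (s : Multiset ℕ) : coeff 0 (partsSeries s : R⟦X⟧) = 1 := by
  simp [partsSeries, coeff_zero_eq_constantCoeff, map_multiset_prod]

lemma one_sub_X_pow_mul_partsSeries_cons {a : ℕ} (ha : a ≠ 0) (s : Multiset ℕ) :
    (1 - X ^ a) * (partsSeries (a ::ₘ s) : R⟦X⟧) = partsSeries s := by
  rw [partsSeries_cons, ← mul_assoc, one_sub_X_pow_mul_geomSeries ha, one_mul]

lemma one_sub_X_pow_mul_partsSeries_of_mem {a : ℕ} (ha : a ≠ 0) {s : Multiset ℕ} (h : a ∈ s) :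
    (1 - X ^ a) * (partsSeries s : R⟦X⟧) = partsSeries (s.erase a) := by
  conv_lhs => rw [← Multiset.cons_erase h]
  exact one_sub_X_pow_mul_partsSeries_cons ha _

lemma partsSeries_mul_prod_one_sub_X_pow {s : Multiset ℕ} (hs : 0 ∉ s) :
    (partsSeries s : R⟦X⟧) * (s.map fun a => 1 - X ^ a).prod = 1 := by
  induction s using Multiset.induction_on with
  | empty => simp
  | cons a s ih =>
    rw [Multiset.mem_cons, not_or] at hs
    rw [Multiset.map_cons, Multiset.prod_cons, mul_left_comm, ← mul_assoc,
      one_sub_X_pow_mul_partsSeries_cons (Ne.symm hs.1), ih hs.2]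

lemma expand_partsSeries (p : ℕ) (hp : p ≠ 0) (s : Multiset ℕ) :
    expand p hp (partsSeries s : R⟦X⟧) = partsSeries (s.map (p * ·)) := by
  simp [partsSeries, map_multiset_prod, Multiset.map_map, expand_geomSeries]

lemma partsSeries_two_three_four :
    (partsSeries {2, 3, 4} : R⟦X⟧) =
      (1 + X ^ 3) * expand 2 two_ne_zero (partsSeries {1, 2, 3}) := by
  rw [expand_partsSeries]
  simp only [Multiset.insert_eq_cons, Multiset.map_cons, Multiset.map_singleton, partsSeries_cons,
    partsSeries_singleton, geomSeries_eq_one_add_X_pow_mul (show 3 ≠ 0 by norm_num)]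
  ring

lemma coeff_succ_partsSeries_one_two_three_sub (n : ℕ) :
    coeff (n + 1) (partsSeries {1, 2, 3} : R⟦X⟧) - coeff n (partsSeries {1, 2, 3}) =
      coeff (n + 1) (partsSeries {2, 3}) := by
  rw [← one_sub_X_pow_mul_partsSeries_cons (R := R) one_ne_zero {2, 3}, pow_one, sub_mul,
    one_mul, map_sub, coeff_succ_X_mul]
  rfl

end CommRing

section Ordered

variable {R : Type*} [CommRing R] [PartialOrder R] [IsOrderedRing R]

lemma coeff_mul_nonneg {f g : R⟦X⟧} (hf : ∀ n, 0 ≤ coeff n f) (hg : ∀ n, 0 ≤ coeff n g)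
    (n : ℕ) : 0 ≤ coeff n (f * g) := by
  rw [coeff_mul]
  exact sum_nonneg fun p _ => mul_nonneg (hf p.1) (hg p.2)

lemma coeff_mul_coeff_le_coeff_mul {f g : R⟦X⟧} (hf : ∀ n, 0 ≤ coeff n f)
    (hg : ∀ n, 0 ≤ coeff n g) (i j : ℕ) : coeff i f * coeff j g ≤ coeff (i + j) (f * g) := by
  rw [coeff_mul]
  exact single_le_sum (f := fun p : ℕ × ℕ => coeff p.1 f * coeff p.2 g)
    (fun p _ => mul_nonneg (hf p.1) (hg p.2)) (a := (i, j))
    (Finset.HasAntidiagonal.mem_antidiagonal.mpr rfl)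

lemma coeff_geomSeries_nonneg (a n : ℕ) : 0 ≤ coeff n (geomSeries a : R⟦X⟧) := by
  rw [coeff_geomSeries]
  split_ifs <;> simp

lemma coeff_partsSeries_nonneg (s : Multiset ℕ) (n : ℕ) :
    0 ≤ coeff n (partsSeries s : R⟦X⟧) := by
  induction s using Multiset.induction_on generalizing n with
  | empty => rw [partsSeries_zero, coeff_one]; split_ifs <;> simp
  | cons a s ih => rw [partsSeries_cons]; exact coeff_mul_nonneg (coeff_geomSeries_nonneg a) ih n

lemma coeff_le_coeff_one_add_X_pow_mul {f : R⟦X⟧} (hf : ∀ n, 0 ≤ coeff n f) (a : ℕ) {m n : ℕ}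
    (h : n = m ∨ n = m + a) : coeff m f ≤ coeff n ((1 + X ^ a) * f) := by
  rw [add_mul, one_mul, map_add, coeff_X_pow_mul']
  rcases h with rfl | rfl
  · have : 0 ≤ if a ≤ n then coeff (n - a) f else 0 := by split_ifs <;> simp [hf]
    exact le_add_of_nonneg_right this
  · rw [if_pos (Nat.le_add_left a m), Nat.add_sub_cancel]
    exact le_add_of_nonneg_left (hf _)

lemma one_le_coeff_partsSeries_two_three {n : ℕ} (hn : 2 ≤ n) :
    1 ≤ coeff n (partsSeries {2, 3} : R⟦X⟧) := by
  obtain ⟨i, j, rfl⟩ : ∃ i j, n = 2 * i + 3 * j := ⟨(n - 3 * (n % 2)) / 2, n % 2, by omega⟩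
  calc (1 : R) = coeff (2 * i) (geomSeries 2) * coeff (3 * j) (partsSeries {3}) := by simp
    _ ≤ _ := coeff_mul_coeff_le_coeff_mul (coeff_geomSeries_nonneg 2)
      (coeff_partsSeries_nonneg _) _ _

lemma monotone_coeff_partsSeries_one_two_three :
    Monotone fun n => coeff n (partsSeries {1, 2, 3} : R⟦X⟧) :=
  monotone_nat_of_le_succ fun n => sub_nonneg.mp <|
    (coeff_succ_partsSeries_one_two_three_sub (R := R) n).symm ▸
      coeff_partsSeries_nonneg (R := R) _ _

lemma one_le_coeff_partsSeries_one_two_three (n : ℕ) :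
    1 ≤ coeff n (partsSeries {1, 2, 3} : R⟦X⟧) :=
  coeff_zero_partsSeries (R := R) {1, 2, 3} ▸ monotone_coeff_partsSeries_one_two_three n.zero_le

lemma coeff_partsSeries_one_two_three_add_one_le {s n : ℕ} (hsn : s < n) (hn : 2 ≤ n) :
    coeff s (partsSeries {1, 2, 3} : R⟦X⟧) + 1 ≤ coeff n (partsSeries {1, 2, 3}) := by
  obtain ⟨m, rfl⟩ : ∃ m, n = m + 1 := ⟨n - 1, by omega⟩
  calc coeff s (partsSeries {1, 2, 3} : R⟦X⟧) + 1
      ≤ coeff m (partsSeries {1, 2, 3}) + coeff (m + 1) (partsSeries {2, 3}) :=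
        add_le_add (monotone_coeff_partsSeries_one_two_three (by omega))
          (one_le_coeff_partsSeries_two_three hn)
    _ = coeff (m + 1) (partsSeries {1, 2, 3}) := by
        rw [← coeff_succ_partsSeries_one_two_three_sub, add_sub_cancel]

lemma coeff_partsSeries_one_two_three_le (m : ℕ) {n : ℕ} (hn : n = 2 * m ∨ n = 2 * m + 3) :
    coeff m (partsSeries {1, 2, 3} : R⟦X⟧) ≤ coeff n (partsSeries {2, 3, 4}) := by
  rw [partsSeries_two_three_four, ← coeff_expand_mul 2 two_ne_zero]
  refine coeff_le_coeff_one_add_X_pow_mul (fun k => ?_) 3 hn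
  rw [expand_partsSeries]
  exact coeff_partsSeries_nonneg _ _

lemma one_le_coeff_partsSeries_two_three_four {n : ℕ} (hn : 2 ≤ n) :
    1 ≤ coeff n (partsSeries {2, 3, 4} : R⟦X⟧) := by
  obtain ⟨m, hm⟩ : ∃ m, n = 2 * m ∨ n = 2 * m + 3 := ⟨(n - 3 * (n % 2)) / 2, by omega⟩
  exact (one_le_coeff_partsSeries_one_two_three m).trans (coeff_partsSeries_one_two_three_le m hm)

lemma coeff_partsSeries_one_two_three_add_one_le_two_three_four {s n : ℕ} (hn : 2 * s + 4 ≤ n)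
    (hn5 : n ≠ 5) :
    coeff s (partsSeries {1, 2, 3} : R⟦X⟧) + 1 ≤ coeff n (partsSeries {2, 3, 4}) := by
  obtain ⟨m, hm⟩ : ∃ m, n = 2 * m ∨ n = 2 * m + 3 := ⟨(n - 3 * (n % 2)) / 2, by omega⟩
  exact (coeff_partsSeries_one_two_three_add_one_le (by omega) (by omega)).trans
    (coeff_partsSeries_one_two_three_le m hm)

end Ordered

lemma inv_prod_one_sub_X_pow {K : Type*} [Field K] {s : Multiset ℕ} (hs : 0 ∉ s) :
    (s.map fun a => (1 - X ^ a : K⟦X⟧)).prod⁻¹ = partsSeries s := by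
  have h := partsSeries_mul_prod_one_sub_X_pow (R := K) hs
  refine (inv_eq_iff_mul_eq_one (right_ne_zero_of_mul_eq_one
    (a := constantCoeff (partsSeries s : K⟦X⟧)) ?_)).mpr h
  rw [← map_mul, h, map_one]

end PowerSeries

lemma gaussCoeff_four_succ_sub {ℓ k : ℕ} (hk : k + 1 < 2 * ℓ + 3) :
    gaussCoeff ℓ 4 (k + 1) - gaussCoeff ℓ 4 k =
      coeff (k + 1) (partsSeries {2, 3, 4} : ℚ⟦X⟧) -
        if ℓ ≤ k then coeff (k - ℓ) (partsSeries {1, 2, 3}) else 0 := by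
  set r : ℚ⟦X⟧ := 1 + X + 2 * X ^ 2 + X ^ 3 + X ^ 4 - X ^ (ℓ + 3) * (1 + X + X ^ 2 + X ^ 3) +
    X ^ (2 * ℓ + 7)
  have hnum : ∏ i ∈ range 4, (1 - X ^ (ℓ + i + 1) : ℚ⟦X⟧) =
      1 - X ^ (ℓ + 1) * (1 + X + X ^ 2 + X ^ 3) + X ^ (2 * ℓ + 3) * r := by
    simp only [prod_range_succ, prod_range_zero, r]
    ring
  have hden : (∏ i ∈ range 4, (1 - X ^ (i + 1) : ℚ⟦X⟧))⁻¹ = partsSeries {1, 2, 3, 4} := by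
    rw [← inv_prod_one_sub_X_pow (by decide)]
    simp [prod_range_succ, mul_assoc]
  have hcancel1 : (1 - X) * (partsSeries {1, 2, 3, 4} : ℚ⟦X⟧) = partsSeries {2, 3, 4} := by
    simpa using one_sub_X_pow_mul_partsSeries_cons (R := ℚ) one_ne_zero {2, 3, 4}
  have hcancel4 : (1 - X ^ 4) * (partsSeries {1, 2, 3, 4} : ℚ⟦X⟧) = partsSeries {1, 2, 3} := by
    rw [one_sub_X_pow_mul_partsSeries_of_mem (by norm_num) (by decide)]
    rfl
  have key : (1 - X) * ((∏ i ∈ range 4, (1 - X ^ (ℓ + i + 1) : ℚ⟦X⟧)) *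
      (∏ i ∈ range 4, (1 - X ^ (i + 1) : ℚ⟦X⟧))⁻¹) = partsSeries {2, 3, 4} -
        X ^ (ℓ + 1) * partsSeries {1, 2, 3} + X ^ (2 * ℓ + 3) * (r * partsSeries {2, 3, 4}) := by
    rw [hnum, hden, ← hcancel1, ← hcancel4]
    ring
  have hdiff := congrArg (coeff (k + 1)) key
  rw [sub_mul, one_mul, map_sub, coeff_succ_X_mul] at hdiff
  unfold gaussCoeff
  rw [hdiff, map_add, map_sub, coeff_X_pow_mul', coeff_X_pow_mul',
    if_neg (show ¬2 * ℓ + 3 ≤ k + 1 by omega), add_zero]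
  simp only [Nat.add_le_add_iff_right, Nat.add_sub_add_right]

theorem one_strict_m4_general (ℓ : ℕ) (hℓ4 : ℓ ≠ 4) (k : ℕ) (h1 : 1 ≤ k)
    (h2 : k ≤ 4 * ℓ / 2 - 3) :
    gaussCoeff ℓ 4 (k + 1) - gaussCoeff ℓ 4 k ≥ 1 := by
  rw [ge_iff_le, gaussCoeff_four_succ_sub (by omega)]
  split_ifs with hkℓ
  · have := coeff_partsSeries_one_two_three_add_one_le_two_three_four (R := ℚ) (s := k - ℓ)
      (n := k + 1) (by omega) (by omega)
    linarith
  · rw [sub_zero]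
    exact one_le_coeff_partsSeries_two_three_four (by omega)

theorem one_strict_m4 (ℓ : ℕ) (hℓ : 1 ≤ ℓ) (hℓ4 : ℓ ≠ 4) (k : ℕ) (h1 : 1 ≤ k)
    (h2 : k ≤ 4 * ℓ / 2 - 3) :
    gaussCoeff ℓ 4 (k + 1) - gaussCoeff ℓ 4 k ≥ 1 :=
  one_strict_m4_general ℓ hℓ4 k h1 h2
end
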